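/- arXiv:0908.4440 — 8 statements merged into one kernel-verified Lean document; each statement's English description precedes it below -/
import Mathlib

section
/- For every rational number t, the discriminant expression (3 + 5t²)² - 4(2 - t²)(-6t² - 1) = t⁴ + 74t² + 17 is not the square of a rational number. -/
/-!
Suppose `c² = a⁴ + 74a²b² + 17b⁴` with `a, b` coprime and `b ≠ 0`. Reducing mod 16, `a` and `b`
are not both odd, so `X = a² + 37b²` is odd; it is prime to `b`, and to 13 because `-37` is not a
square mod 13. Hence `(X - c)/2` and `(X + c)/2` are coprime positive integers with product
`338 b⁴ = 2 · 13² · b⁴`, so `X` is `338e⁴ + f⁴` or `2e⁴ + 169f⁴` with `b² = e²f²`. Either way one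
gets coprime `e, F` with `e² ≤ b²` and `A² = F⁴ - 37e²F² + 338e⁴`. This is again a difference of
squares, `(4F² - 74e²)² - (4A)² = 68e⁴`, and factoring gives `4F² - 74e² = ±(17g⁴ + k⁴)` with
`e² = g²k²`. For odd `e` this is impossible mod 16; for `e = 2E` the same factorisation of
`(F² - 74E²)² - A² = 68E⁴` either is impossible mod 8 or yields the smaller solution
`F² = k⁴ + 74k²g² + 17g⁴` with `4g² ≤ e²`. Infinite descent on `|b|` finishes the proof, and a
rational `t = n/d` reduces to the integers `(n, d)`.
-/

theorem Int.sq_le_sq_mul_sq (x : ℤ) {y : ℤ} (hy : y ≠ 0) : x ^ 2 ≤ x ^ 2 * y ^ 2 :=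
  le_mul_of_one_le_right (sq_nonneg x) (one_le_sq_iff_one_le_abs _ |>.mpr (Int.one_le_abs hy))

theorem Int.exists_isCoprime_mul_eq_of_sq_sub_sq {S T N : ℤ} (hSN : IsCoprime S N)
    (h : S ^ 2 - T ^ 2 = 4 * N) : ∃ k, IsCoprime k (S - k) ∧ k * (S - k) = N := by
  have hST : Even (S - T) := by
    have : Even ((S - T) * (S + T)) := ⟨2 * N, by linear_combination h⟩
    rcases Int.even_mul.mp this with h' | h'
    · exact h'
    · simpa [show S - T = S + T - 2 * T by ring, Int.even_sub] using h'
  obtain ⟨k, hk⟩ := hST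
  obtain rfl : T = S - 2 * k := by linear_combination -hk
  have hkN : k * (S - k) = N := mul_left_cancel₀ four_ne_zero (by linear_combination h)
  refine ⟨k, isCoprime_of_prime_dvd ?_ fun z hz hzk hzSk => ?_, hkN⟩
  · rintro ⟨rfl, hS⟩
    rw [sub_zero] at hS
    rw [hS, ← hkN, hS, zero_mul] at hSN
    exact not_isCoprime_zero_zero hSN
  · refine hz.not_isUnit (hSN.isUnit_of_dvd' ?_ ?_)
    · simpa using dvd_add hzk hzSk
    · exact hkN ▸ hzk.mul_right _

theorem Prime.pow_dvd_or_pow_dvd_of_isCoprime {R : Type*} [CommRing R] [IsDomain R] {r p q : R}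
    (hr : Prime r) (hpq : IsCoprime p q) (n : ℕ) (h : r ^ n ∣ p * q) : r ^ n ∣ p ∨ r ^ n ∣ q := by
  by_cases hrp : r ∣ p
  · refine .inl (hr.pow_dvd_of_dvd_mul_right n (fun hrq => ?_) h)
    exact hr.not_isUnit (hpq.isUnit_of_dvd' hrp hrq)
  · exact .inr (hr.pow_dvd_of_dvd_mul_left n hrp h)

theorem Int.exists_eq_pow_four_of_mul_eq_pow_four {p q E : ℤ} (hp : 0 ≤ p) (hq : 0 ≤ q)
    (hpq : IsCoprime p q) (h : p * q = E ^ 4) :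
    ∃ g k, IsCoprime g k ∧ g ^ 2 * k ^ 2 = E ^ 2 ∧ p = g ^ 4 ∧ q = k ^ 4 := by
  obtain ⟨g, hg⟩ := exists_associated_pow_of_mul_eq_pow' hpq h
  obtain ⟨k, hk⟩ := exists_associated_pow_of_mul_eq_pow' hpq.symm (by rw [mul_comm, h])
  obtain rfl := Int.eq_of_associated_of_nonneg hg (by positivity) hp
  obtain rfl := Int.eq_of_associated_of_nonneg hk (by positivity) hq
  refine ⟨g, k, (IsCoprime.pow_iff (by norm_num) (by norm_num)).mp hpq, ?_, rfl, rfl⟩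
  rw [← pow_left_inj₀ (by positivity) (by positivity) two_ne_zero]
  linear_combination h

theorem Int.exists_eq_pow_four_of_mul_eq_prime_pow_mul_pow_four {p q r E : ℤ} (hr : Prime r)
    (n : ℕ) (hp : 0 < p) (hq : 0 < q) (hpq : IsCoprime p q) (h : p * q = r ^ n * E ^ 4) :
    ∃ g k, IsCoprime g k ∧ g ^ 2 * k ^ 2 = E ^ 2 ∧
      (p = r ^ n * g ^ 4 ∧ q = k ^ 4 ∨ p = g ^ 4 ∧ q = r ^ n * k ^ 4) := by
  wlog hrp : r ^ n ∣ p generalizing p q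
  · have hrq := (hr.pow_dvd_or_pow_dvd_of_isCoprime hpq n ⟨_, h⟩).resolve_left hrp
    obtain ⟨g, k, hgk, hE, hpq'⟩ := this hq hp hpq.symm (by rw [mul_comm, h]) hrq
    exact ⟨k, g, hgk.symm, by rw [← hE]; ring, by tauto⟩
  obtain ⟨p', rfl⟩ := hrp
  have hp'q : p' * q = E ^ 4 :=
    mul_left_cancel₀ (pow_ne_zero n hr.ne_zero) (by rw [← h, mul_assoc])
  have hp' : 0 ≤ p' := nonneg_of_mul_nonneg_left (hp'q ▸ by positivity) hq
  obtain ⟨g, k, hgk, hE, rfl, rfl⟩ :=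
    Int.exists_eq_pow_four_of_mul_eq_pow_four hp' hq.le hpq.of_mul_left_right hp'q
  exact ⟨g, k, hgk, hE, .inl ⟨rfl, rfl⟩⟩

theorem exists_eq_seventeen_mul_pow_four_add {S T E : ℤ} (hE : E ≠ 0) (hSE : IsCoprime S E)
    (h : S ^ 2 - T ^ 2 = 68 * E ^ 4) :
    ∃ g k, IsCoprime g k ∧ g ^ 2 * k ^ 2 = E ^ 2 ∧
      (S = 17 * g ^ 4 + k ^ 4 ∨ S = -(17 * g ^ 4 + k ^ 4)) := by
  have h17 : Prime (17 : ℤ) := by norm_num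
  have hS17 : ¬ 17 ∣ S := by
    rintro ⟨s, rfl⟩
    obtain ⟨t, rfl⟩ : 17 ∣ T :=
      h17.dvd_of_dvd_pow (n := 2) ⟨17 * s ^ 2 - 4 * E ^ 4, by linear_combination -h⟩
    have : 17 ∣ 4 * E ^ 4 :=
      ⟨s ^ 2 - t ^ 2, mul_left_cancel₀ (by norm_num : (17 : ℤ) ≠ 0) (by linear_combination -h)⟩
    have hE17 : 17 ∣ E :=
      h17.dvd_of_dvd_pow ((h17.dvd_or_dvd this).resolve_left (by norm_num))
    exact h17.not_isUnit (hSE.isUnit_of_dvd' (dvd_mul_right _ _) hE17)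
  obtain ⟨p, hpq, hprod⟩ := Int.exists_isCoprime_mul_eq_of_sq_sub_sq (T := T)
    ((h17.coprime_iff_not_dvd.mpr hS17).symm.mul_right (hSE.pow_right (n := 4)))
    (by linear_combination h)
  have key : ∀ p q : ℤ, 0 < p → 0 < q → IsCoprime p q → p * q = 17 ^ 1 * E ^ 4 →
      ∃ g k, IsCoprime g k ∧ g ^ 2 * k ^ 2 = E ^ 2 ∧ p + q = 17 * g ^ 4 + k ^ 4 := by
    intro p q hp hq hpq h
    obtain ⟨g, k, hgk, hE, ⟨rfl, rfl⟩ | ⟨rfl, rfl⟩⟩ :=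
      Int.exists_eq_pow_four_of_mul_eq_prime_pow_mul_pow_four h17 1 hp hq hpq h
    · exact ⟨g, k, hgk, hE, by ring⟩
    · exact ⟨k, g, hgk.symm, by rw [← hE]; ring, by ring⟩
  have hpos : 0 < p * (S - p) := by rw [hprod]; positivity
  rcases pos_and_pos_or_neg_and_neg_of_mul_pos hpos with ⟨hp, hq⟩ | ⟨hp, hq⟩
  · obtain ⟨g, k, hgk, hE, hsum⟩ := key _ _ hp hq hpq (by rw [hprod]; ring)
    exact ⟨g, k, hgk, hE, .inl (by linear_combination hsum)⟩
  · obtain ⟨g, k, hgk, hE, hsum⟩ :=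
      key _ _ (neg_pos.mpr hp) (neg_pos.mpr hq) hpq.neg_neg (by rw [neg_mul_neg, hprod]; ring)
    exact ⟨g, k, hgk, hE, .inr (by linear_combination -hsum)⟩

theorem exists_add_eq_of_mul_eq_338 {u v b : ℤ} (hu : 0 < u) (hv : 0 < v) (huv : IsCoprime u v)
    (h : u * v = 338 * b ^ 4) :
    ∃ e f, IsCoprime e f ∧ e ^ 2 * f ^ 2 = b ^ 2 ∧
      (u + v = 338 * e ^ 4 + f ^ 4 ∨ u + v = 2 * e ^ 4 + 169 * f ^ 4 ∧ IsCoprime e 13) := by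
  wlog h2 : 2 ∣ u generalizing u v
  · have h2v := (Int.prime_two.dvd_or_dvd ⟨169 * b ^ 4, by rw [h]; ring⟩).resolve_left h2
    obtain ⟨e, f, hef, hb, hsum⟩ := this hv hu huv.symm (by rw [mul_comm, h]) h2v
    exact ⟨e, f, hef, hb, by rwa [add_comm]⟩
  obtain ⟨u, rfl⟩ := h2
  obtain ⟨e, f, hef, hb, ⟨rfl, rfl⟩ | ⟨rfl, rfl⟩⟩ :=
    Int.exists_eq_pow_four_of_mul_eq_prime_pow_mul_pow_four (E := b)
      (by norm_num : Prime (13 : ℤ)) 2 (by linarith) hv huv.of_mul_left_right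
      (mul_left_cancel₀ two_ne_zero (by linear_combination h))
  · exact ⟨e, f, hef, hb, .inl (by ring)⟩
  · refine ⟨e, f, hef, hb, .inr ⟨by ring, ?_⟩⟩
    exact (IsCoprime.pow_iff (by norm_num) (by norm_num)).mp huv.of_mul_left_right.of_mul_right_left

theorem Int.thirteen_dvd_of_thirteen_dvd_sq_add_37_mul_sq {a b : ℤ} (h : 13 ∣ a ^ 2 + 37 * b ^ 2) :
    13 ∣ b := by
  have key : ∀ x y : ZMod 13, x ^ 2 + 37 * y ^ 2 = 0 → y = 0 := by decide
  have h' := (ZMod.intCast_zmod_eq_zero_iff_dvd (a ^ 2 + 37 * b ^ 2) 13).mpr h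
  push_cast at h'
  exact (ZMod.intCast_zmod_eq_zero_iff_dvd b 13).mp (key _ _ h')

theorem sq_ne_quartic_of_odd {a b c : ℤ} (ha : Odd a) (hb : Odd b) :
    c ^ 2 ≠ a ^ 4 + 74 * a ^ 2 * b ^ 2 + 17 * b ^ 4 := by
  obtain ⟨x, rfl⟩ := ha
  obtain ⟨y, rfl⟩ := hb
  have key : ∀ x y z : ZMod 16,
      z ^ 2 ≠ (2 * x + 1) ^ 4 + 74 * (2 * x + 1) ^ 2 * (2 * y + 1) ^ 2 + 17 * (2 * y + 1) ^ 4 := by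
    decide
  intro h
  exact key x y c (by simpa using congrArg (Int.cast : ℤ → ZMod 16) h)

theorem four_mul_sq_sub_ne_of_odd {F g k : ℤ} (hg : Odd g) (hk : Odd k) :
    4 * F ^ 2 - 74 * (g ^ 2 * k ^ 2) ≠ 17 * g ^ 4 + k ^ 4 ∧
      4 * F ^ 2 - 74 * (g ^ 2 * k ^ 2) ≠ -(17 * g ^ 4 + k ^ 4) := by
  obtain ⟨x, rfl⟩ := hg
  obtain ⟨y, rfl⟩ := hk
  have key : ∀ x y z : ZMod 16,
      4 * z ^ 2 - 74 * ((2 * x + 1) ^ 2 * (2 * y + 1) ^ 2) ≠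
        17 * (2 * x + 1) ^ 4 + (2 * y + 1) ^ 4 ∧
      4 * z ^ 2 - 74 * ((2 * x + 1) ^ 2 * (2 * y + 1) ^ 2) ≠
        -(17 * (2 * x + 1) ^ 4 + (2 * y + 1) ^ 4) := by
    decide
  constructor <;> intro h
  · exact (key x y F).1 (by simpa using congrArg (Int.cast : ℤ → ZMod 16) h)
  · exact (key x y F).2 (by simpa using congrArg (Int.cast : ℤ → ZMod 16) h)

theorem sq_sub_ne_of_odd {F g k : ℤ} (hF : Odd F) :
    F ^ 2 - 74 * (g ^ 2 * k ^ 2) ≠ -(17 * g ^ 4 + k ^ 4) := by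
  obtain ⟨x, rfl⟩ := hF
  have key : ∀ x y z : ZMod 8, (2 * x + 1) ^ 2 - 74 * (y ^ 2 * z ^ 2) ≠ -(17 * y ^ 4 + z ^ 4) := by
    decide
  intro h
  exact key x g k (by simpa using congrArg (Int.cast : ℤ → ZMod 8) h)

theorem isCoprime_sq_add_37_mul_sq {a b c : ℤ} (hab : IsCoprime a b)
    (h : c ^ 2 = a ^ 4 + 74 * a ^ 2 * b ^ 2 + 17 * b ^ 4) :
    IsCoprime (a ^ 2 + 37 * b ^ 2) (338 * b ^ 4) := by
  have hXb : IsCoprime (a ^ 2 + 37 * b ^ 2) b := by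
    rw [show a ^ 2 + 37 * b ^ 2 = a ^ 2 + b * (37 * b) by ring]
    exact hab.pow_left.add_mul_left_left _
  have hX2 : IsCoprime (a ^ 2 + 37 * b ^ 2) 2 := by
    rw [Int.isCoprime_two_right]
    rcases Int.even_or_odd a with ha | ha <;> rcases Int.even_or_odd b with hb | hb
    · exact absurd (hab.isUnit_of_dvd' ha.two_dvd hb.two_dvd) (by decide)
    · rw [add_comm]
      exact ((by decide : Odd (37 : ℤ)).mul hb.pow).add_even (Int.even_pow.mpr ⟨ha, two_ne_zero⟩)
    · exact ha.pow.add_even ((Int.even_pow.mpr ⟨hb, two_ne_zero⟩).mul_left 37)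
    · exact absurd h (sq_ne_quartic_of_odd ha hb)
  have hX13 : IsCoprime (a ^ 2 + 37 * b ^ 2) 13 := by
    have h13 : Prime (13 : ℤ) := by norm_num
    refine (h13.coprime_iff_not_dvd.mpr fun hdvd => ?_).symm
    exact h13.not_isUnit
      (hXb.isUnit_of_dvd' hdvd (Int.thirteen_dvd_of_thirteen_dvd_sq_add_37_mul_sq hdvd))
  convert hX2.mul_right ((hX13.pow_right (n := 2)).mul_right (hXb.pow_right (n := 4))) using 1
  ring

theorem exists_sq_eq_auxiliary_quartic {a b c : ℤ} (hab : IsCoprime a b) (hb : b ≠ 0)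
    (h : c ^ 2 = a ^ 4 + 74 * a ^ 2 * b ^ 2 + 17 * b ^ 4) :
    ∃ A e F, IsCoprime e F ∧ e ≠ 0 ∧ e ^ 2 ≤ b ^ 2 ∧
      A ^ 2 = F ^ 4 - 37 * e ^ 2 * F ^ 2 + 338 * e ^ 4 := by
  obtain ⟨u, huv, hprod⟩ := Int.exists_isCoprime_mul_eq_of_sq_sub_sq (T := c)
    (isCoprime_sq_add_37_mul_sq hab h) (by linear_combination -h)
  obtain ⟨hu, hv⟩ : 0 < u ∧ 0 < a ^ 2 + 37 * b ^ 2 - u := by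
    have hpos : 0 < u * (a ^ 2 + 37 * b ^ 2 - u) := by rw [hprod]; positivity
    refine (pos_and_pos_or_neg_and_neg_of_mul_pos hpos).resolve_right fun ⟨h1, h2⟩ => ?_
    have : 0 < a ^ 2 + 37 * b ^ 2 := by positivity
    linarith
  obtain ⟨e, f, hef, hb2, hsum⟩ := exists_add_eq_of_mul_eq_338 hu hv huv hprod
  have he : e ≠ 0 := by rintro rfl; exact hb (by simpa using hb2.symm)
  have hf : f ≠ 0 := by rintro rfl; exact hb (by simpa using hb2.symm)
  have hle : e ^ 2 ≤ b ^ 2 := hb2 ▸ Int.sq_le_sq_mul_sq e hf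
  rcases hsum with hsum | ⟨hsum, he13⟩
  · exact ⟨a, e, f, hef, he, hle, by linear_combination hsum + 37 * hb2⟩
  -- multiplying by 13² turns `2e⁴ + 169f⁴` into `338e⁴ + (13f)⁴`
  · exact ⟨13 * a, e, 13 * f, he13.mul_right hef, he, hle,
      by linear_combination 169 * hsum + 6253 * hb2⟩

theorem exists_smaller_solution_of_sq_eq_auxiliary_quartic {A e F : ℤ} (he : e ≠ 0)
    (heF : IsCoprime e F) (h : A ^ 2 = F ^ 4 - 37 * e ^ 2 * F ^ 2 + 338 * e ^ 4) :
    ∃ a b c, IsCoprime a b ∧ b ≠ 0 ∧ 4 * b ^ 2 ≤ e ^ 2 ∧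
      c ^ 2 = a ^ 4 + 74 * a ^ 2 * b ^ 2 + 17 * b ^ 4 := by
  rcases Int.even_or_odd e with ⟨E, rfl⟩ | he_odd
  · rw [← two_mul] at heF he
    have hE : E ≠ 0 := right_ne_zero_of_mul he
    have hF : Odd F := Int.isCoprime_two_left.mp heF.of_mul_left_left
    have hSE : IsCoprime (F ^ 2 - 74 * E ^ 2) E := by
      rw [show F ^ 2 - 74 * E ^ 2 = F ^ 2 + E * (-74 * E) by ring]
      exact heF.of_mul_left_right.symm.pow_left.add_mul_left_left _
    obtain ⟨g, k, hgk, hE2, hS | hS⟩ :=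
      exists_eq_seventeen_mul_pow_four_add (T := A) hE hSE (by linear_combination -h)
    · have hg : g ≠ 0 := by rintro rfl; exact hE (by simpa using hE2.symm)
      have hk : k ≠ 0 := by rintro rfl; exact hE (by simpa using hE2.symm)
      refine ⟨k, g, F, hgk.symm, hg, ?_, by linear_combination hS - 74 * hE2⟩
      nlinarith [Int.sq_le_sq_mul_sq g hk]
    · rw [← hE2] at hS
      exact absurd hS (sq_sub_ne_of_odd hF)
  · have hSe : IsCoprime (4 * F ^ 2 - 74 * e ^ 2) e := by
      rw [show 4 * F ^ 2 - 74 * e ^ 2 = 2 ^ 2 * F ^ 2 + e * (-74 * e) by ring]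
      exact ((Int.isCoprime_two_left.mpr he_odd).pow_left.mul_left
        heF.symm.pow_left).add_mul_left_left _
    obtain ⟨g, k, hgk, hE2, hS⟩ :=
      exists_eq_seventeen_mul_pow_four_add (T := 4 * A) he hSe (by linear_combination -16 * h)
    obtain ⟨hg, hk⟩ := Int.odd_mul.mp (hE2 ▸ he_odd.pow : Odd (g ^ 2 * k ^ 2))
    rw [Int.odd_pow' two_ne_zero] at hg hk
    rw [← hE2] at hS
    exact absurd hS (not_or.mpr (four_mul_sq_sub_ne_of_odd hg hk))

theorem exists_smaller_solution {a b c : ℤ} (hab : IsCoprime a b) (hb : b ≠ 0)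
    (h : c ^ 2 = a ^ 4 + 74 * a ^ 2 * b ^ 2 + 17 * b ^ 4) :
    ∃ a' b' c' : ℤ, IsCoprime a' b' ∧ b' ≠ 0 ∧ b'.natAbs < b.natAbs ∧
      c' ^ 2 = a' ^ 4 + 74 * a' ^ 2 * b' ^ 2 + 17 * b' ^ 4 := by
  obtain ⟨A, e, F, heF, he, hle, hA⟩ := exists_sq_eq_auxiliary_quartic hab hb h
  obtain ⟨a', b', c', hab', hb', hle', h'⟩ :=
    exists_smaller_solution_of_sq_eq_auxiliary_quartic he heF hA
  refine ⟨a', b', c', hab', hb', Int.natAbs_lt_iff_sq_lt.mpr ?_, h'⟩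
  have : 0 < b' ^ 2 := by positivity
  linarith

theorem sq_ne_quartic {a b c : ℤ} (hab : IsCoprime a b) (hb : b ≠ 0) :
    c ^ 2 ≠ a ^ 4 + 74 * a ^ 2 * b ^ 2 + 17 * b ^ 4 := by
  induction hn : b.natAbs using Nat.strong_induction_on generalizing a b c with
  | _ n ih =>
    intro h
    obtain ⟨a', b', c', hab', hb', hlt, h'⟩ := exists_smaller_solution hab hb h
    exact ih _ (hn ▸ hlt) hab' hb' rfl h'

theorem stmt_0 (t : ℚ) :
    (3 + 5 * t ^ 2) ^ 2 - 4 * (2 - t ^ 2) * (-6 * t ^ 2 - 1) = t ^ 4 + 74 * t ^ 2 + 17 ∧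
    ¬∃ w : ℚ, w ^ 2 = t ^ 4 + 74 * t ^ 2 + 17 := by
  refine ⟨by ring, fun ⟨w, hw⟩ => ?_⟩
  obtain ⟨c, hc⟩ : IsSquare (t.num ^ 4 + 74 * t.num ^ 2 * t.den ^ 2 + 17 * t.den ^ 4 : ℤ) := by
    rw [← Rat.isSquare_intCast_iff]
    refine ⟨w * t.den ^ 2, ?_⟩
    push_cast
    rw [← t.mul_den_eq_num]
    linear_combination (-(t.den : ℚ) ^ 4) * hw
  exact sq_ne_quartic (a := t.num) (b := t.den) (c := c)
    (Int.isCoprime_iff_gcd_eq_one.mpr t.reduced) (by positivity) (by rw [hc]; ring)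
end

section
/- For every rational number t, the product (-6t² - 1)(2 - t²) is not the square of a rational number. -/
/-!
Write `t = a / b` in lowest terms. A rational square root of the product gives an integer `c`
with `c² = (6a² + b²)(a² - 2b²)`. Any common divisor of the two factors divides `13a²` and
`13b²`, hence `13`, and `13` cannot divide `a² - 2b²` because `2` is not a square mod `13`;
so the factors are coprime, and being nonnegative, both are squares. Since `a` or `b` is odd,
this is impossible modulo `8`.
-/

theorem Int.dvd_and_dvd_of_dvd_sq_sub_mul_sq {p : ℕ} [Fact p.Prime] {d a b : ℤ}
    (hd : ¬IsSquare (d : ZMod p)) (h : (p : ℤ) ∣ a ^ 2 - d * b ^ 2) :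
    (p : ℤ) ∣ a ∧ (p : ℤ) ∣ b := by
  simp only [← ZMod.intCast_zmod_eq_zero_iff_dvd] at h ⊢
  push_cast at h
  have hb : (b : ZMod p) = 0 := by
    by_contra hb
    exact hd ⟨a / b, by field_simp; linear_combination -h⟩
  rw [hb] at h
  exact ⟨by simpa using h, hb⟩

theorem Int.isCoprime_six_mul_sq_add_sq_sq_sub_two_mul_sq {a b : ℤ} (hab : IsCoprime a b) :
    IsCoprime (6 * a ^ 2 + b ^ 2) (a ^ 2 - 2 * b ^ 2) := by
  have two_nonsquare : ¬IsSquare ((2 : ℤ) : ZMod 13) := by decide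
  have : Fact (Nat.Prime 13) := ⟨by norm_num⟩
  have h13 : IsCoprime (13 : ℤ) (a ^ 2 - 2 * b ^ 2) := by
    rw [Prime.coprime_iff_not_dvd (Int.prime_iff_natAbs_prime.mpr (by norm_num))]
    intro h
    obtain ⟨ha, hb⟩ := Int.dvd_and_dvd_of_dvd_sq_sub_mul_sq (p := 13) two_nonsquare h
    exact (by decide : ¬IsUnit (13 : ℤ)) (hab.isUnit_of_dvd' ha hb)
  obtain ⟨p, q, hpq⟩ := h13
  obtain ⟨r, s, hrs⟩ := hab.pow (m := 2) (n := 2)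
  -- for the two factors `X`, `Y`: `2X + Y = 13a²` and `X - 6Y = 13b²`,
  -- so `13 = r(2X + Y) + s(X - 6Y)`
  exact ⟨p * (2 * r + s), p * (r - 6 * s) + q, by linear_combination hpq + 13 * p * hrs⟩

theorem Int.isSquare_and_isSquare_of_isCoprime_of_mul_eq_sq {x y c : ℤ} (hxy : IsCoprime x y)
    (hx : 0 < x) (h : x * y = c ^ 2) : IsSquare x ∧ IsSquare y := by
  obtain ⟨u, hu | hu⟩ := Int.sq_of_isCoprime hxy h
  · obtain ⟨v, hv | hv⟩ := Int.sq_of_isCoprime hxy.symm (by rw [mul_comm, h])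
    · exact ⟨⟨u, by rw [hu, sq]⟩, ⟨v, by rw [hv, sq]⟩⟩
    · have : y = 0 := by nlinarith [sq_nonneg c, sq_nonneg v]
      exact ⟨⟨u, by rw [hu, sq]⟩, ⟨0, by rw [this, mul_zero]⟩⟩
  · nlinarith [sq_nonneg u]

theorem Int.odd_or_odd_of_isCoprime {a b : ℤ} (hab : IsCoprime a b) : Odd a ∨ Odd b := by
  by_contra! h
  simp only [Int.not_odd_iff_even] at h
  exact (by decide : ¬IsUnit (2 : ℤ)) (hab.isUnit_of_dvd' h.1.two_dvd h.2.two_dvd)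

theorem Odd.intCast_sq_eq_one_zmod_eight {n : ℤ} (hn : Odd n) : (n : ZMod 8) ^ 2 = 1 := by
  obtain ⟨k, rfl⟩ := hn
  push_cast
  generalize (k : ZMod 8) = x
  revert x
  decide

theorem Int.not_isSquare_six_mul_sq_add_sq_and_sq_sub_two_mul_sq {a b : ℤ}
    (hab : Odd a ∨ Odd b) :
    ¬(IsSquare (6 * a ^ 2 + b ^ 2) ∧ IsSquare (a ^ 2 - 2 * b ^ 2)) := by
  have mod_eight : ∀ x y : ZMod 8, x ^ 2 = 1 ∨ y ^ 2 = 1 →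
      ¬(IsSquare (6 * x ^ 2 + y ^ 2) ∧ IsSquare (x ^ 2 - 2 * y ^ 2)) := by
    decide
  rintro ⟨hX, hY⟩
  refine mod_eight a b
    (hab.imp Odd.intCast_sq_eq_one_zmod_eight Odd.intCast_sq_eq_one_zmod_eight) ⟨?_, ?_⟩
  · simpa using hX.map (Int.castRingHom (ZMod 8))
  · simpa using hY.map (Int.castRingHom (ZMod 8))

theorem Int.sq_ne_six_mul_sq_add_sq_mul_sq_sub_two_mul_sq {a b : ℤ} (hab : IsCoprime a b)
    (c : ℤ) :
    c ^ 2 ≠ (6 * a ^ 2 + b ^ 2) * (a ^ 2 - 2 * b ^ 2) := by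
  intro h
  have hX : 0 < 6 * a ^ 2 + b ^ 2 := by
    rcases hab.ne_zero_or_ne_zero with ha | hb <;> positivity
  exact Int.not_isSquare_six_mul_sq_add_sq_and_sq_sub_two_mul_sq (Int.odd_or_odd_of_isCoprime hab)
    (Int.isSquare_and_isSquare_of_isCoprime_of_mul_eq_sq
      (Int.isCoprime_six_mul_sq_add_sq_sq_sub_two_mul_sq hab) hX h.symm)

theorem stmt_1 (t : ℚ) : ¬∃ w : ℚ, w ^ 2 = (-6 * t ^ 2 - 1) * (2 - t ^ 2) := by
  rintro ⟨w, hw⟩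
  rw [← Rat.num_div_den t] at hw
  have hsq : IsSquare
      (((6 * t.num ^ 2 + t.den ^ 2) * (t.num ^ 2 - 2 * t.den ^ 2) : ℤ) : ℚ) := by
    refine ⟨w * t.den ^ 2, ?_⟩
    field_simp at hw
    push_cast
    linear_combination -hw
  obtain ⟨c, hc⟩ := Rat.isSquare_intCast_iff.mp hsq
  exact Int.sq_ne_six_mul_sq_add_sq_mul_sq_sub_two_mul_sq t.isCoprime_num_den c (by rw [hc, sq])
end

section
/- Let a, b, c ∈ ℚ with a ≠ 0. If b² - 4ac is not a square in ℚ and a·c is not a square in ℚ, then the polynomial a·x⁴ + b·x² + c is irreducible in ℚ[x]. -/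
/-!
Dividing by `a`, the quartic becomes the monic `X⁴ + B X² + D`. A root `x` would make the
discriminant `B² - 4D` the square `(2x² + B)²`. A factorisation into monic quadratics
`(X² + pX + r)(X² - pX + u)` forces `p (u - r) = 0`: if `p = 0` the discriminant is `(r - u)²`,
otherwise `u = r` and `D = r²`. Rescaling by `a²` turns these into squares `b² - 4ac` and `ac`.
-/

open Polynomial

section Field

variable {K : Type*} [Field K]

lemma isSquare_discrim_or_isSquare_of_biquadratic_eq_mul {B D p r t u : K}
    (h : X ^ 4 + C B * X ^ 2 + C D = (X ^ 2 + C p * X + C r) * (X ^ 2 + C t * X + C u)) :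
    IsSquare (discrim 1 B D) ∨ IsSquare D := by
  have hexp : (X ^ 2 + C p * X + C r) * (X ^ 2 + C t * X + C u) =
      X ^ 4 + C (p + t) * X ^ 3 + C (r + u + p * t) * X ^ 2 + C (p * u + r * t) * X +
        C (r * u) := by
    simp only [map_add, map_mul]; ring
  rw [hexp] at h
  have coeff_eq (n : ℕ) := congrArg (coeff · n) h
  have h3 := coeff_eq 3
  have h2 := coeff_eq 2
  have h1 := coeff_eq 1
  have h0 := coeff_eq 0
  simp only [coeff_add, coeff_C_mul, coeff_X_pow, coeff_X, coeff_C] at h3 h2 h1 h0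
  norm_num at h3 h2 h1 h0
  obtain rfl : t = -p := by linear_combination -h3
  obtain hp | hur : p = 0 ∨ u - r = 0 := mul_eq_zero.mp (by linear_combination -h1)
  · subst hp
    exact .inl ⟨r - u, by rw [discrim]; linear_combination (r + u + B) * h2 - 4 * h0⟩
  · exact .inr ⟨r, by linear_combination h0 + r * hur⟩

lemma isSquare_discrim_of_isRoot_biquadratic {B D x : K}
    (h : (X ^ 4 + C B * X ^ 2 + C D).IsRoot x) : IsSquare (discrim 1 B D) := by
  have hx : 1 * (x ^ 2 * x ^ 2) + B * x ^ 2 + D = 0 := by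
    simpa [← pow_add] using h
  exact ⟨_, (discrim_eq_sq_of_quadratic_eq_zero hx).trans (sq _)⟩

lemma isMonicOfDegree_biquadratic (B D : K) : IsMonicOfDegree (X ^ 4 + C B * X ^ 2 + C D) 4 := by
  rw [isMonicOfDegree_iff]
  exact ⟨by compute_degree!, by simp⟩

theorem irreducible_biquadratic_of_not_isSquare {B D : K} (hdisc : ¬IsSquare (discrim 1 B D))
    (hD : ¬IsSquare D) : Irreducible (X ^ 4 + C B * X ^ 2 + C D) := by
  have hf := isMonicOfDegree_biquadratic B D
  rw [hf.monic.irreducible_iff_lt_natDegree_lt ?_, hf.natDegree_eq]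
  rintro q hq hdeg ⟨h, hqh⟩
  obtain hq1 | hq2 : q.natDegree = 1 ∨ q.natDegree = 2 := by simp at hdeg; omega
  · obtain ⟨r, rfl⟩ := isMonicOfDegree_one_iff.mp ⟨hq1, hq⟩
    refine hdisc (isSquare_discrim_of_isRoot_biquadratic (x := -r) ?_)
    rw [← dvd_iff_isRoot, C_neg, sub_neg_eq_add, hqh]
    exact dvd_mul_right _ _
  · have hq' : IsMonicOfDegree q 2 := ⟨hq2, hq⟩
    have hh : IsMonicOfDegree h 2 := hq'.of_mul_left (hqh ▸ hf)
    obtain ⟨p, r, rfl⟩ := isMonicOfDegree_two_iff.mp hq'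
    obtain ⟨t, u, rfl⟩ := isMonicOfDegree_two_iff.mp hh
    exact (isSquare_discrim_or_isSquare_of_biquadratic_eq_mul hqh).elim hdisc hD
  · rintro hone
    simpa [hone] using hf.natDegree_eq

theorem irreducible_C_mul_biquadratic_of_not_isSquare {a b c : K}
    (hdisc : ¬IsSquare (discrim a b c)) (hac : ¬IsSquare (a * c)) :
    Irreducible (C a * X ^ 4 + C b * X ^ 2 + C c) := by
  have ha : a ≠ 0 := by
    rintro rfl
    exact hdisc ⟨b, by rw [discrim]; ring⟩
  have hmonic :
      C a * X ^ 4 + C b * X ^ 2 + C c = C a * (X ^ 4 + C (b / a) * X ^ 2 + C (c / a)) := by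
    simp only [mul_add, ← mul_assoc, ← C_mul, mul_div_cancel₀ _ ha]
  rw [hmonic, irreducible_isUnit_mul (isUnit_C.mpr ha.isUnit)]
  apply irreducible_biquadratic_of_not_isSquare
  · rintro ⟨s, hs⟩
    refine hdisc ⟨a * s, ?_⟩
    rw [discrim] at hs ⊢
    linear_combination (norm := skip) a ^ 2 * hs
    field_simp
    ring
  · rintro ⟨s, hs⟩
    refine hac ⟨a * s, ?_⟩
    linear_combination (norm := skip) a ^ 2 * hs
    field_simp
    ring

end Field

open Polynomial in
theorem stmt_2_general (a b c : ℚ)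
    (h1 : ¬∃ r : ℚ, r ^ 2 = b ^ 2 - 4 * a * c)
    (h2 : ¬∃ r : ℚ, r ^ 2 = a * c) :
    Irreducible (C a * X ^ 4 + C b * X ^ 2 + C c) :=
  irreducible_C_mul_biquadratic_of_not_isSquare
    (fun ⟨r, hr⟩ => h1 ⟨r, by rw [discrim] at hr; rw [hr, sq]⟩)
    (fun ⟨r, hr⟩ => h2 ⟨r, by rw [hr, sq]⟩)

open Polynomial in
theorem stmt_2 (a b c : ℚ) (ha : a ≠ 0)
    (h1 : ¬∃ r : ℚ, r ^ 2 = b ^ 2 - 4 * a * c)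
    (h2 : ¬∃ r : ℚ, r ^ 2 = a * c) :
    Irreducible (C a * X ^ 4 + C b * X ^ 2 + C c) :=
  stmt_2_general a b c h1 h2
end

section
/- For every rational number t, the polynomial P_t(x) = (2 - t²)x⁴ + (3 + 5t²)x² + (-6t² - 1) is irreducible in ℚ[x]. -/
/-!
Write `P_t = a X⁴ + b X² + c` with `a = 2 - t² ≠ 0`. A monic factor of degree 1 or 2 forces
either the discriminant `b² - 4ac = t⁴ + 74 t² + 17` or `c / a` to be a rational square. The
latter would give `(t² - 2)(z² - 6) = 13`, impossible since 2 and 6 are not squares modulo 13.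

The former is excluded by descent through a 2-isogeny. In a primitive solution of
`Y² = p⁴ + 74 p² q² + 17 q⁴` with `q ≠ 0`, `p` is odd and `q` even (otherwise a congruence
modulo 8 or 16 fails), and factoring `(p² + 37 q² - Y)(p² + 37 q² + Y) = 1352 q⁴` yields a
solution of `P² = W⁴ - 148 W² L² + 5408 L⁴` with `0 < |L| < |q|`. Factoring
`(W² - 74 L² - P)(W² - 74 L² + P) = 68 L⁴` in turn yields a primitive solution of the first
equation with `0 < |q'| ≤ |L|`.
-/

namespace Polynomial

variable {K : Type*} [Field K] {a b c : K}

theorem discrim_eq_sq_or_of_biquadratic_eq_mul {s r α β γ : K}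
    (h : C a * X ^ 4 + C b * X ^ 2 + C c =
      (X ^ 2 + C s * X + C r) * (C α * X ^ 2 + C β * X + C γ)) :
    discrim a b c = (γ - r * a) ^ 2 ∨ a * r ^ 2 = c := by
  have hexp : (X ^ 2 + C s * X + C r) * (C α * X ^ 2 + C β * X + C γ) =
      C α * X ^ 4 + C (β + s * α) * X ^ 3 + C (γ + s * β + r * α) * X ^ 2 +
        C (s * γ + r * β) * X + C (r * γ) := by
    simp only [map_add, map_mul]
    ring
  rw [hexp] at h
  have hcoeff (n : ℕ) := congrArg (coeff · n) h
  have h4 := hcoeff 4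
  have h3 := hcoeff 3
  have h2 := hcoeff 2
  have h1 := hcoeff 1
  have h0 := hcoeff 0
  simp only [coeff_add, coeff_C_mul, coeff_X_pow, coeff_X, coeff_C] at h4 h3 h2 h1 h0
  norm_num at h4 h3 h2 h1 h0
  subst h4
  by_cases hs : s = 0
  · subst hs
    left
    rw [discrim]
    linear_combination (b + γ + r * a) * h2 - 4 * a * h0
  · right
    have hγ : γ = r * a := by
      apply mul_left_cancel₀ hs
      linear_combination -h1 + r * h3
    rw [h0, hγ]
    ring

theorem irreducible_biquadratic (ha : a ≠ 0) (hdisc : ∀ s, discrim a b c ≠ s ^ 2)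
    (hc : ∀ z, a * z ^ 2 ≠ c) : Irreducible (C a * X ^ 4 + C b * X ^ 2 + C c) := by
  set P := C a * X ^ 4 + C b * X ^ 2 + C c with hP
  have hdeg : P.natDegree = 4 := by rw [hP]; compute_degree!
  have hP0 : P ≠ 0 := ne_zero_of_natDegree_gt (n := 0) (by omega)
  have hPu : ¬IsUnit P := fun hu => by have := natDegree_eq_zero_of_isUnit hu; omega
  rw [irreducible_iff_lt_natDegree_lt hP0 hPu, hdeg]
  rintro q hq hq_deg ⟨f, hf⟩
  obtain hq1 | hq2 : q.natDegree = 1 ∨ q.natDegree = 2 := by simp at hq_deg; omega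
  · have hroot : P.eval (-q.coeff 0) = 0 := by
      rw [hf, eval_mul, hq.eq_X_add_C hq1]; simp
    refine quadratic_ne_zero_of_discrim_ne_sq hdisc (q.coeff 0 ^ 2) ?_
    simp only [hP, eval_add, eval_mul, eval_C, eval_pow, eval_X] at hroot
    linear_combination hroot
  · have hf0 : f ≠ 0 := by rintro rfl; exact hP0 (by simpa using hf)
    have hf_deg : f.natDegree = 2 := by
      have := congrArg natDegree hf
      rw [hq.natDegree_mul' hf0] at this
      omega
    have hq_eq : q = X ^ 2 + C (q.coeff 1) * X + C (q.coeff 0) := by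
      rw [hq.as_sum, hq2]; simp [Finset.sum_range_succ]; ring
    have hf_eq : f = C (f.coeff 2) * X ^ 2 + C (f.coeff 1) * X + C (f.coeff 0) := by
      rw [f.as_sum_range_C_mul_X_pow, hf_deg]; simp [Finset.sum_range_succ]; ring
    rw [hq_eq, hf_eq] at hf
    rcases discrim_eq_sq_or_of_biquadratic_eq_mul hf with h | h
    · exact hdisc _ h
    · exact hc _ h

end Polynomial

section Residues

variable {ℓ : ℕ} {d x y : ℤ}

theorem Int.dvd_and_dvd_of_dvd_sq_sub_mul_sq_s3 (hℓ : ℓ.Prime) (hd : ∀ r : ZMod ℓ, r ^ 2 ≠ d)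
    (h : (ℓ : ℤ) ∣ x ^ 2 - d * y ^ 2) : (ℓ : ℤ) ∣ x ∧ (ℓ : ℤ) ∣ y := by
  have := Fact.mk hℓ
  simp only [← ZMod.intCast_zmod_eq_zero_iff_dvd] at h ⊢
  push_cast at h
  have hy : (y : ZMod ℓ) = 0 := by
    by_contra hy
    exact hd (x / y) (by field_simp; linear_combination h)
  rw [hy] at h
  exact ⟨by simpa using h, hy⟩

theorem IsCoprime.not_dvd_sq_sub_mul_sq (hxy : IsCoprime x y) (hℓ : ℓ.Prime)
    (hd : ∀ r : ZMod ℓ, r ^ 2 ≠ d) : ¬(ℓ : ℤ) ∣ x ^ 2 - d * y ^ 2 := fun h =>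
  let ⟨hx, hy⟩ := Int.dvd_and_dvd_of_dvd_sq_sub_mul_sq_s3 hℓ hd h
  (Nat.prime_iff_prime_int.mp hℓ).not_isUnit (hxy.isUnit_of_dvd' hx hy)

end Residues

theorem sq_ne_quartic_of_odd_of_odd {p q : ℤ} (hp : Odd p) (hq : Odd q) (Y : ℤ) :
    Y ^ 2 ≠ p ^ 4 + 74 * p ^ 2 * q ^ 2 + 17 * q ^ 4 := by
  obtain ⟨a, rfl⟩ := hp
  obtain ⟨b, rfl⟩ := hq
  intro h
  have key : ∀ a b y : ZMod 16, y ^ 2 ≠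
      (2 * a + 1) ^ 4 + 74 * (2 * a + 1) ^ 2 * (2 * b + 1) ^ 2 + 17 * (2 * b + 1) ^ 4 := by
    decide
  exact key a b Y (by simpa using congrArg (Int.cast : ℤ → ZMod 16) h)

theorem two_sq_add_sq_ne_of_odd {p q K V : ℤ} (hq : Odd q) (hK : Odd K) (hV : Odd V) :
    2 * K ^ 2 + V ^ 2 ≠ p ^ 2 + 37 * q ^ 2 := by
  obtain ⟨b, rfl⟩ := hq
  obtain ⟨k, rfl⟩ := hK
  obtain ⟨v, rfl⟩ := hV
  intro h
  have key : ∀ a b k v : ZMod 8,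
      2 * (2 * k + 1) ^ 2 + (2 * v + 1) ^ 2 ≠ a ^ 2 + 37 * (2 * b + 1) ^ 2 := by
    decide
  exact key p b k v (by simpa using congrArg (Int.cast : ℤ → ZMod 8) h)

theorem sq_add_quartic_ne_of_odd {W : ℤ} (hW : Odd W) (a b : ℤ) :
    W ^ 2 + 17 * a ^ 4 + b ^ 4 ≠ 74 * a ^ 2 * b ^ 2 := by
  obtain ⟨w, rfl⟩ := hW
  intro h
  have key : ∀ w a b : ZMod 8, (2 * w + 1) ^ 2 + 17 * a ^ 4 + b ^ 4 ≠ 74 * a ^ 2 * b ^ 2 := by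
    decide
  exact key w a b (by simpa using congrArg (Int.cast : ℤ → ZMod 8) h)

theorem Int.exists_nonneg_sq_of_isCoprime {a b c : ℤ} (h : IsCoprime a b) (hab : a * b = c ^ 2)
    (ha : 0 ≤ a) : ∃ x, 0 ≤ x ∧ a = x ^ 2 := by
  obtain ⟨x, hx | hx⟩ := Int.sq_of_isCoprime h hab
  · exact ⟨|x|, abs_nonneg x, by rw [sq_abs, hx]⟩
  · exact ⟨|x|, abs_nonneg x, by nlinarith [sq_abs x, sq_nonneg x]⟩

theorem Int.exists_eq_pow_of_isCoprime {a b c : ℤ} (h : IsCoprime a b) {k : ℕ}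
    (hab : a * b = c ^ k) : ∃ x, a = x ^ k ∨ a = -x ^ k := by
  obtain ⟨x, hx⟩ := exists_associated_pow_of_mul_eq_pow' h hab
  exact ⟨x, by rcases Int.associated_iff.mp hx with hx | hx <;> [left; right] <;> linarith⟩

theorem exists_two_sq_add_sq_of_sq_eq_quartic {p q Y : ℤ} (hpq : IsCoprime p q)
    (hpq2 : Odd (p + q)) (hY : Y ^ 2 = p ^ 4 + 74 * p ^ 2 * q ^ 2 + 17 * q ^ 4) :
    ∃ K V : ℤ, 0 ≤ K ∧ 0 ≤ V ∧ IsCoprime K V ∧ K * V = 13 * q ^ 2 ∧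
      2 * K ^ 2 + V ^ 2 = p ^ 2 + 37 * q ^ 2 := by
  set A := p ^ 2 + 37 * q ^ 2 with hA
  have hA_odd : Odd A := by
    rw [show A = (p + q) ^ 2 + 2 * (18 * q ^ 2 - p * q) by ring]
    exact (hpq2.pow).add_even (even_two_mul _)
  have hAY : A ^ 2 - Y ^ 2 = 8 * (13 * q ^ 2) ^ 2 := by rw [hA, hY]; ring
  have hY_odd : Odd Y := by
    rw [← Int.odd_pow' two_ne_zero, show Y ^ 2 = A ^ 2 - 2 * (4 * (13 * q ^ 2) ^ 2) by linarith]
    exact (hA_odd.pow).sub_even (even_two_mul _)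
  -- `u` is half of whichever of `(A - Y) / 2`, `(A + Y) / 2` is even
  obtain ⟨u, hu⟩ : ∃ u, u * (A - 2 * u) = (13 * q ^ 2) ^ 2 := by
    have h4 : 4 ∣ A - Y ∨ 4 ∣ A + Y := by
      rw [Int.odd_iff] at hA_odd hY_odd; omega
    refine h4.elim (fun ⟨u, hu⟩ => ⟨u, ?_⟩) (fun ⟨u, hu⟩ => ⟨u, ?_⟩) <;>
      refine mul_left_cancel₀ (by norm_num : (8 : ℤ) ≠ 0) ?_
    · linear_combination hAY - (A + Y - 4 * u) * hu
    · linear_combination hAY - (A - Y - 4 * u) * hu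
  have hA13 : IsCoprime A (13 * q ^ 2) := by
    refine IsCoprime.mul_right ?_ ((hpq.pow).add_mul_right_left 37)
    refine ((Prime.coprime_iff_not_dvd (by norm_num)).mpr ?_).symm
    simpa using hpq.not_dvd_sq_sub_mul_sq (ℓ := 13) (d := -37) (by norm_num) (by decide)
  have huv : IsCoprime u (A - 2 * u) := by
    have hAu : IsCoprime A u := hA13.pow_right.of_isCoprime_of_dvd_right (Dvd.intro _ hu)
    simpa [sub_eq_add_neg, mul_comm] using hAu.symm.add_mul_left_right (-2)
  have hA_pos : 0 < A := by
    have : A ≠ 0 := fun h => by simp [h] at hA_odd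
    positivity
  have hu0 : 0 ≤ u := by nlinarith [sq_nonneg (13 * q ^ 2)]
  have hv0 : 0 ≤ A - 2 * u := by nlinarith [sq_nonneg (13 * q ^ 2)]
  obtain ⟨K, hK, rfl⟩ := Int.exists_nonneg_sq_of_isCoprime huv hu hu0
  obtain ⟨V, hV, hVeq⟩ := Int.exists_nonneg_sq_of_isCoprime huv.symm (by rw [mul_comm, hu]) hv0
  refine ⟨K, V, hK, hV, (IsCoprime.pow_iff two_pos two_pos).mp (hVeq ▸ huv), ?_, by linarith⟩
  refine (pow_left_inj₀ (mul_nonneg hK hV) (by positivity) two_ne_zero).mp ?_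
  rw [mul_pow, ← hVeq, hu]

theorem exists_sq_eq_dual_quartic_of_two_sq_add_sq {p q K V : ℤ} (hpq : IsCoprime p q)
    (hK : 0 ≤ K) (hV : 0 ≤ V) (hKV : IsCoprime K V) (hV_odd : Odd V) (hmul : K * V = 13 * q ^ 2)
    (hadd : 2 * K ^ 2 + V ^ 2 = p ^ 2 + 37 * q ^ 2) :
    ∃ l w P W : ℤ, q ^ 2 = l ^ 2 * w ^ 2 ∧ Odd w ∧ Odd W ∧ IsCoprime P l ∧
      P ^ 2 = W ^ 4 - 37 * W ^ 2 * l ^ 2 + 338 * l ^ 4 := by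
  have h13 : Prime (13 : ℤ) := by norm_num
  rcases h13.dvd_mul.mp ⟨q ^ 2, hmul⟩ with ⟨K₀, rfl⟩ | ⟨V₀, rfl⟩
  · have hK₀V : K₀ * V = q ^ 2 := by linarith
    have hcop : IsCoprime K₀ V := hKV.of_mul_left_right
    obtain ⟨l, -, rfl⟩ := Int.exists_nonneg_sq_of_isCoprime hcop hK₀V (by linarith)
    obtain ⟨w, -, rfl⟩ :=
      Int.exists_nonneg_sq_of_isCoprime hcop.symm (by rw [mul_comm, hK₀V]) hV
    have hw : Odd w := (Int.odd_pow' two_ne_zero).mp hV_odd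
    have hlq : l ∣ q := (Int.pow_dvd_pow_iff two_ne_zero).mp (Dvd.intro _ hK₀V)
    exact ⟨l, w, p, w, hK₀V.symm, hw, hw, hpq.of_isCoprime_of_dvd_right hlq,
      by linear_combination -hadd + 37 * hK₀V⟩
  · have hKV₀ : K * V₀ = q ^ 2 := by linarith
    have hcop : IsCoprime K V₀ := hKV.of_mul_right_right
    obtain ⟨l, -, rfl⟩ := Int.exists_nonneg_sq_of_isCoprime hcop hKV₀ hK
    obtain ⟨w, -, rfl⟩ :=
      Int.exists_nonneg_sq_of_isCoprime hcop.symm (by rw [mul_comm, hKV₀]) (by linarith)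
    have hw : Odd w := (Int.odd_pow' two_ne_zero).mp (Int.odd_mul.mp hV_odd).2
    have hlq : l ∣ q := (Int.pow_dvd_pow_iff two_ne_zero).mp (Dvd.intro _ hKV₀)
    -- a common factor 13 of `l` and `13 p` would divide `p`, hence `gcd p q`
    have h13l : IsCoprime 13 l := by
      refine (h13.coprime_iff_not_dvd).mpr fun h13l => h13.not_isUnit ?_
      refine hpq.isUnit_of_dvd' (h13.dvd_of_dvd_pow (n := 2) ?_) (h13l.trans hlq)
      obtain ⟨m, rfl⟩ := h13l
      exact ⟨2 * 13 ^ 3 * m ^ 4 + 13 * w ^ 4 - 37 * 13 * m ^ 2 * w ^ 2, by linarith⟩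
    exact ⟨l, w, 13 * p, 13 * w, hKV₀.symm, hw, (by decide : Odd (13 : ℤ)).mul hw,
      h13l.mul_left (hpq.of_isCoprime_of_dvd_right hlq),
      by linear_combination -169 * hadd + 169 * 37 * hKV₀⟩

theorem exists_sq_eq_dual_quartic {p q Y : ℤ} (hpq : IsCoprime p q) (hq0 : q ≠ 0) (hp : Odd p)
    (hq : Even q) (hY : Y ^ 2 = p ^ 4 + 74 * p ^ 2 * q ^ 2 + 17 * q ^ 4) :
    ∃ P W L : ℤ, IsCoprime P L ∧ Odd W ∧ L ≠ 0 ∧ L.natAbs < q.natAbs ∧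
      P ^ 2 = W ^ 4 - 148 * W ^ 2 * L ^ 2 + 5408 * L ^ 4 := by
  obtain ⟨K, V, hK, hV, hKV, hmul, hadd⟩ :=
    exists_two_sq_add_sq_of_sq_eq_quartic hpq (hp.add_even hq) hY
  have hV_odd : Odd V := by
    rw [← Int.odd_pow' two_ne_zero, show V ^ 2 = p ^ 2 + 37 * q ^ 2 - 2 * K ^ 2 by linarith]
    exact (hp.pow.add_even ((hq.pow_of_ne_zero two_ne_zero).mul_left 37)).sub_even (even_two_mul _)
  obtain ⟨l, w, P, W, hq_sq, hw, hW, hPl, hcurve⟩ :=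
    exists_sq_eq_dual_quartic_of_two_sq_add_sq hpq hK hV hKV hV_odd hmul hadd
  have hl : Even l := by
    have : Even (l ^ 2 * w ^ 2) := hq_sq ▸ hq.pow_of_ne_zero two_ne_zero
    exact (Int.even_pow' two_ne_zero).mp
      ((Int.even_mul.mp this).resolve_right (Int.not_even_iff_odd.mpr hw.pow))
  obtain ⟨L, rfl⟩ := hl
  have hL : L ≠ 0 := by rintro rfl; exact hq0 (by simpa using hq_sq)
  have hw2 : 0 < w ^ 2 := by
    have : w ≠ 0 := by rintro rfl; simp at hw
    positivity
  refine ⟨P, W, L, hPl.of_isCoprime_of_dvd_right ⟨2, by ring⟩, hW, hL, ?_,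
    by linear_combination hcurve⟩
  rw [Int.natAbs_lt_iff_sq_lt, hq_sq]
  have : 0 < L ^ 2 := by positivity
  nlinarith

theorem exists_sq_eq_quartic_of_mul_eq {g g' W L : ℤ} (hW : Odd W) (hL : L ≠ 0)
    (hgg' : IsCoprime g g') (h17 : 17 ∣ g) (hmul : g * g' = 17 * L ^ 4)
    (hadd : g + g' = W ^ 2 - 74 * L ^ 2) :
    ∃ a b : ℤ, IsCoprime b a ∧ a ≠ 0 ∧ a.natAbs ≤ L.natAbs ∧
      W ^ 2 = b ^ 4 + 74 * b ^ 2 * a ^ 2 + 17 * a ^ 4 := by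
  obtain ⟨h, rfl⟩ := h17
  have hmul' : h * g' = L ^ 4 :=
    mul_left_cancel₀ (by norm_num : (17 : ℤ) ≠ 0) (by linear_combination hmul)
  have hcop : IsCoprime h g' := hgg'.of_mul_left_right
  obtain ⟨a, ha⟩ := Int.exists_eq_pow_of_isCoprime hcop hmul'
  obtain ⟨b, hb⟩ := Int.exists_eq_pow_of_isCoprime hcop.symm (by rw [mul_comm, hmul'])
  have hL4 : 0 < L ^ 4 := by positivity
  have hab4 : 0 ≤ a ^ 4 * b ^ 4 := by positivity
  have hL2 : L ^ 2 = a ^ 2 * b ^ 2 := by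
    refine (pow_left_inj₀ (sq_nonneg L) (by positivity) two_ne_zero).mp ?_
    rcases ha with rfl | rfl <;> rcases hb with rfl | rfl <;> linarith
  have ha0 : a ≠ 0 := by rintro rfl; exact hL (by simpa using hL2)
  have hb0 : b ≠ 0 := by rintro rfl; exact hL (by simpa using hL2)
  rcases ha with rfl | rfl <;> rcases hb with rfl | rfl
  · refine ⟨a, b, (IsCoprime.pow_iff four_pos four_pos).mp hcop.symm, ha0, ?_,
      by linear_combination -hadd + 74 * hL2⟩
    rw [Int.natAbs_le_iff_sq_le, hL2]
    have : 0 < b ^ 2 := by positivity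
    nlinarith [sq_nonneg a]
  · linarith
  · linarith
  · exact absurd (by linear_combination -hadd + 74 * hL2) (sq_add_quartic_ne_of_odd hW a b)

theorem exists_sq_eq_quartic_of_sq_eq_dual {P W L : ℤ} (hW : Odd W) (hPL : IsCoprime P L)
    (hL : L ≠ 0) (h : P ^ 2 = W ^ 4 - 148 * W ^ 2 * L ^ 2 + 5408 * L ^ 4) :
    ∃ a b : ℤ, IsCoprime b a ∧ a ≠ 0 ∧ a.natAbs ≤ L.natAbs ∧
      W ^ 2 = b ^ 4 + 74 * b ^ 2 * a ^ 2 + 17 * a ^ 4 := by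
  have hW2 : Odd (W ^ 2) := hW.pow
  have hP : Odd P := by
    rw [← Int.odd_pow' two_ne_zero, h, show W ^ 4 - 148 * W ^ 2 * L ^ 2 + 5408 * L ^ 4 =
      (W ^ 2) ^ 2 - 2 * (74 * W ^ 2 * L ^ 2 - 2704 * L ^ 4) by ring]
    exact hW2.pow.sub_even (even_two_mul _)
  obtain ⟨g, hg⟩ : Even (W ^ 2 - 74 * L ^ 2 - P) := by
    rw [show W ^ 2 - 74 * L ^ 2 - P = W ^ 2 - P - 2 * (37 * L ^ 2) by ring]
    exact (hW2.sub_odd hP).sub (even_two_mul _)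
  have hmul : g * (g + P) = 17 * L ^ 4 :=
    mul_left_cancel₀ (by norm_num : (4 : ℤ) ≠ 0)
      (by linear_combination -(W ^ 2 - 74 * L ^ 2 + P + 2 * g) * hg - h)
  have hadd : g + (g + P) = W ^ 2 - 74 * L ^ 2 := by linarith
  have h17 : Prime (17 : ℤ) := by norm_num
  -- modulo 17 the curve reads `P² ≡ (W² - 6 L²)²`, and 6 is not a square mod 17
  have h17P : ¬(17 : ℤ) ∣ P := fun h17P => by
    have : (17 : ℤ) ∣ (W ^ 2 - 6 * L ^ 2) ^ 2 := by
      rw [show (W ^ 2 - 6 * L ^ 2) ^ 2 = P ^ 2 + 17 * (8 * W ^ 2 * L ^ 2 - 316 * L ^ 4) by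
        linear_combination -h]
      exact (dvd_pow h17P two_ne_zero).add (dvd_mul_right _ _)
    obtain ⟨-, h17L⟩ := Int.dvd_and_dvd_of_dvd_sq_sub_mul_sq_s3 (ℓ := 17) (d := 6) (by norm_num)
      (by decide) (h17.dvd_of_dvd_pow this)
    exact h17.not_isUnit (hPL.isUnit_of_dvd' h17P h17L)
  have hcop : IsCoprime g (g + P) := by
    have hP17 : IsCoprime P (17 * L ^ 4) :=
      ((h17.coprime_iff_not_dvd).mpr h17P).symm.mul_right hPL.pow_right
    have hPg : IsCoprime P g := hP17.of_isCoprime_of_dvd_right (Dvd.intro _ hmul)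
    simpa [add_comm] using hPg.symm.add_mul_left_right 1
  rcases h17.dvd_mul.mp ⟨L ^ 4, hmul⟩ with h17g | h17g
  · exact exists_sq_eq_quartic_of_mul_eq hW hL hcop h17g hmul hadd
  · exact exists_sq_eq_quartic_of_mul_eq hW hL hcop.symm h17g (by rw [mul_comm, hmul])
      (by rw [add_comm, hadd])

theorem Int.sq_ne_quartic {p q : ℤ} (hpq : IsCoprime p q) (hq0 : q ≠ 0) (Y : ℤ) :
    Y ^ 2 ≠ p ^ 4 + 74 * p ^ 2 * q ^ 2 + 17 * q ^ 4 := by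
  induction hn : q.natAbs using Nat.strong_induction_on generalizing p q Y with
  | _ n ih =>
  intro hY
  rcases Int.even_or_odd p with hp | hp <;> rcases Int.even_or_odd q with hq | hq
  · exact Int.prime_two.not_isUnit (hpq.isUnit_of_dvd' hp.two_dvd hq.two_dvd)
  · obtain ⟨K, V, -, -, -, hmul, hadd⟩ :=
      exists_two_sq_add_sq_of_sq_eq_quartic hpq (hp.add_odd hq) hY
    have hKV : Odd (K * V) := hmul ▸ (by decide : Odd (13 : ℤ)).mul hq.pow
    exact two_sq_add_sq_ne_of_odd hq (Int.odd_mul.mp hKV).1 (Int.odd_mul.mp hKV).2 hadd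
  · obtain ⟨P, W, L, hPL, hW, hL, hLq, hcurve⟩ := exists_sq_eq_dual_quartic hpq hq0 hp hq hY
    obtain ⟨a, b, hba, ha, haL, hWab⟩ := exists_sq_eq_quartic_of_sq_eq_dual hW hPL hL hcurve
    exact ih a.natAbs (by omega) hba ha W rfl hWab
  · exact sq_ne_quartic_of_odd_of_odd hp hq Y hY

theorem Rat.sq_ne_quartic (t y : ℚ) : y ^ 2 ≠ t ^ 4 + 74 * t ^ 2 + 17 := by
  intro h
  have hsq : IsSquare ((t.num ^ 4 + 74 * t.num ^ 2 * t.den ^ 2 + 17 * t.den ^ 4 : ℤ) : ℚ) := by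
    refine ⟨y * t.den ^ 2, ?_⟩
    push_cast
    rw [← Rat.mul_den_eq_num]
    linear_combination -(t.den : ℚ) ^ 4 * h
  obtain ⟨Y, hY⟩ := Rat.isSquare_intCast_iff.mp hsq
  exact Int.sq_ne_quartic (Rat.isCoprime_num_den t) (by positivity) Y (by rw [hY]; ring)

theorem Rat.sq_sub_two_mul_sq_sub_six_ne (t z : ℚ) : (t ^ 2 - 2) * (z ^ 2 - 6) ≠ 13 := by
  intro h
  have key : (t.num ^ 2 - 2 * t.den ^ 2) * (z.num ^ 2 - 6 * z.den ^ 2) =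
      13 * ((t.den : ℤ) ^ 2 * z.den ^ 2) := by
    have : ((t.num ^ 2 - 2 * t.den ^ 2) * (z.num ^ 2 - 6 * z.den ^ 2) : ℚ) =
        13 * ((t.den : ℚ) ^ 2 * z.den ^ 2) := by
      rw [← Rat.mul_den_eq_num t, ← Rat.mul_den_eq_num z]
      linear_combination ((t.den : ℚ) ^ 2 * z.den ^ 2) * h
    exact_mod_cast this
  have h13 : Prime (13 : ℤ) := by norm_num
  rcases h13.dvd_mul.mp ⟨_, key⟩ with h | h
  · exact (Rat.isCoprime_num_den t).not_dvd_sq_sub_mul_sq (ℓ := 13) (d := 2) (by norm_num)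
      (by decide) h
  · exact (Rat.isCoprime_num_den z).not_dvd_sq_sub_mul_sq (ℓ := 13) (d := 6) (by norm_num)
      (by decide) h

open Polynomial in
theorem stmt_3 (t : ℚ) :
    Irreducible (C (2 - t ^ 2) * X ^ 4 + C (3 + 5 * t ^ 2) * X ^ 2 + C (-6 * t ^ 2 - 1)) := by
  refine irreducible_biquadratic ?_ (fun s hs => Rat.sq_ne_quartic t s ?_)
    (fun z hz => Rat.sq_sub_two_mul_sq_sub_six_ne t z ?_)
  · intro h
    have : IsSquare (2 : ℚ) := ⟨t, by linear_combination h⟩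
    norm_num at this
  · rw [discrim] at hs
    linear_combination -hs
  · linear_combination -hz
end

section
/- There are no rational numbers t, w with w² = (-6t² - 1)(2 - t²). -/
/-! Clearing denominators with `t = a / b` in lowest terms turns a rational point into an
integer `m` with `m² = (6a² + b²)(a² - 2b²)` and `a, b` coprime. Modulo 13 this forces
`13 ∣ a` and `13 ∣ b`. -/

theorem ZMod.eq_zero_of_sq_eq_quartic_thirteen :
    ∀ x y z : ZMod 13, z ^ 2 = (6 * x ^ 2 + y ^ 2) * (x ^ 2 - 2 * y ^ 2) → x = 0 ∧ y = 0 := by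
  decide

theorem Int.not_isSquare_quartic_of_isCoprime {a b : ℤ} (hab : IsCoprime a b) :
    ¬IsSquare ((6 * a ^ 2 + b ^ 2) * (a ^ 2 - 2 * b ^ 2)) := by
  rintro ⟨m, hm⟩
  have hmod : (m : ZMod 13) ^ 2 =
      (6 * (a : ZMod 13) ^ 2 + (b : ZMod 13) ^ 2) * ((a : ZMod 13) ^ 2 - 2 * (b : ZMod 13) ^ 2) := by
    rw [sq]
    exact_mod_cast congrArg (Int.cast : ℤ → ZMod 13) hm.symm
  obtain ⟨ha, hb⟩ := ZMod.eq_zero_of_sq_eq_quartic_thirteen _ _ _ hmod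
  rw [ZMod.intCast_zmod_eq_zero_iff_dvd] at ha hb
  have h13 := Int.isUnit_iff.mp (hab.isUnit_of_dvd' ha hb)
  norm_num at h13

theorem stmt_5 : ¬∃ t w : ℚ, w ^ 2 = (-6 * t ^ 2 - 1) * (2 - t ^ 2) := by
  rintro ⟨t, w, h⟩
  have hsq : IsSquare (((6 * t.num ^ 2 + t.den ^ 2) * (t.num ^ 2 - 2 * t.den ^ 2) : ℤ) : ℚ) := by
    refine ⟨w * t.den ^ 2, ?_⟩
    rw [← Rat.num_div_den t] at h
    field_simp at h
    push_cast
    linear_combination -h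
  refine Int.not_isSquare_quartic_of_isCoprime ?_ (Rat.isSquare_intCast_iff.mp hsq)
  exact Int.isCoprime_iff_gcd_eq_one.mpr t.reduced
end

section
/- For all real numbers a, b, not both zero, there exists a real number x such that (2b² - a²)x⁴ + (3b² + 5a²)x² + (-6a² - b²) > 0. -/
/-!
With t = x², the expression equals a² · (-(t - 2)(t - 3)) + b² · (2t² + 3t - 1).
Both coefficients are positive for t ∈ (2, 3); the choice x = 3/2, t = 9/4, gives
(3/16) a² + (127/8) b², which is positive as soon as a and b are not both zero.
-/

lemma mul_sq_add_mul_sq_pos {p q a b : ℝ} (hp : 0 < p) (hq : 0 < q) (hab : ¬(a = 0 ∧ b = 0)) :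
    0 < p * a ^ 2 + q * b ^ 2 := by
  rcases not_and_or.mp hab with ha | hb <;> positivity

theorem stmt_6 (a b : ℝ) (hab : ¬(a = 0 ∧ b = 0)) :
    ∃ x : ℝ, (2 * b ^ 2 - a ^ 2) * x ^ 4 + (3 * b ^ 2 + 5 * a ^ 2) * x ^ 2
      + (-6 * a ^ 2 - b ^ 2) > 0 := by
  refine ⟨3 / 2, ?_⟩
  have h_eval : (2 * b ^ 2 - a ^ 2) * (3 / 2 : ℝ) ^ 4 + (3 * b ^ 2 + 5 * a ^ 2) * (3 / 2) ^ 2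
      + (-6 * a ^ 2 - b ^ 2) = 3 / 16 * a ^ 2 + 127 / 8 * b ^ 2 := by ring
  rw [h_eval]
  exact mul_sq_add_mul_sq_pos (by norm_num) (by norm_num) hab
end

section
/- Let p ≥ 5 be a prime and a, b coprime integers. Then there exist x, y, z ∈ ℚ_p with y² + z² = a²(x² - 2)(3 - x²) + b²(2x⁴ + 3x² - 1). -/
/-!
Reduced mod `p`, the right-hand side is `-6a² - b²` at `x = 0` and `-2a² + 4b²` at `x = 1`;
both vanish only if `a² ≡ 2b²` and `13b² ≡ 0`, which forces `a ≡ b ≡ 0` since `2` is not a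
square mod `13`. So some `x ∈ ℤ_p` makes the right-hand side a unit `c`. Over `𝔽_p` every element
is a sum of two squares, and for `c ≢ 0` one of them is nonzero: a smooth point of `y² + z² = c`,
which Hensel's lemma lifts to `ℤ_p`.
-/

open Polynomial

def quarticForm {R : Type*} [CommRing R] (a b x : R) : R :=
  a ^ 2 * (x ^ 2 - 2) * (3 - x ^ 2) + b ^ 2 * (2 * x ^ 4 + 3 * x ^ 2 - 1)

lemma map_quarticForm {R S : Type*} [CommRing R] [CommRing S] (f : R →+* S) (a b x : R) :
    f (quarticForm a b x) = quarticForm (f a) (f b) (f x) := by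
  simp only [quarticForm, map_add, map_sub, map_mul, map_pow, map_one, map_ofNat]

namespace ZMod

variable {p : ℕ} [Fact p.Prime]

lemma natCast_ne_zero_of_prime_ne {q : ℕ} (hq : q.Prime) (hpq : p ≠ q) :
    (q : ZMod p) ≠ 0 := by
  rw [Ne, ZMod.natCast_eq_zero_iff, Nat.prime_dvd_prime_iff_eq Fact.out hq]
  exact hpq

lemma eq_zero_of_sq_eq_two_mul_sq (hp : p % 8 = 3 ∨ p % 8 = 5) {α β : ZMod p}
    (h : α ^ 2 = 2 * β ^ 2) : β = 0 := by
  by_contra hβ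
  have hsq : IsSquare (2 : ZMod p) := ⟨α / β, by field_simp; linear_combination -h⟩
  rw [exists_sq_eq_two_iff (by omega)] at hsq
  omega

lemma exists_quarticForm_ne_zero (hp : p ≠ 2) {α β : ZMod p} (h : α ≠ 0 ∨ β ≠ 0) :
    ∃ t, quarticForm α β t ≠ 0 := by
  by_contra! h0
  have hzero := h0 0
  have hone := h0 1
  norm_num [quarticForm] at hzero hone
  have hα : α ^ 2 = 2 * β ^ 2 :=
    mul_left_cancel₀ (natCast_ne_zero_of_prime_ne Nat.prime_two hp)
      (by push_cast; linear_combination -hone)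
  have hβ : β = 0 := by
    by_cases hp13 : p = 13
    · subst hp13
      exact eq_zero_of_sq_eq_two_mul_sq (by norm_num) hα
    · have h13 : ((13 : ℕ) : ZMod p) * β ^ 2 = 0 := by
        push_cast
        linear_combination -hzero - 6 * hα
      simpa using
        (mul_eq_zero.mp h13).resolve_left (natCast_ne_zero_of_prime_ne (by norm_num) hp13)
  simp_all

lemma exists_sq_add_sq_of_ne_zero {c : ZMod p} (hc : c ≠ 0) :
    ∃ y z : ZMod p, y ≠ 0 ∧ y ^ 2 + z ^ 2 = c := by
  obtain ⟨y, z, hyz⟩ := sq_add_sq p c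
  by_cases hy : y = 0
  · refine ⟨z, y, ?_, by rw [add_comm, hyz]⟩
    rintro rfl
    simp_all
  · exact ⟨y, z, hy, hyz⟩

end ZMod

namespace PadicInt

variable {p : ℕ} [Fact p.Prime]

lemma toZMod_surjective : Function.Surjective (toZMod : ℤ_[p] →+* ZMod p) :=
  fun y => ⟨y.val, by simp⟩

lemma norm_lt_one_iff_toZMod_eq_zero (x : ℤ_[p]) : ‖x‖ < 1 ↔ toZMod x = 0 := by
  rw [← RingHom.mem_ker, ker_toZMod, IsLocalRing.mem_maximalIdeal, mem_nonunits]

lemma norm_eq_one_iff_toZMod_ne_zero (x : ℤ_[p]) : ‖x‖ = 1 ↔ toZMod x ≠ 0 := by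
  rw [Ne, ← norm_lt_one_iff_toZMod_eq_zero, not_lt]
  exact ⟨ge_of_eq, (norm_le_one x).antisymm⟩

lemma isSquare_of_isSquare_toZMod (hp : p ≠ 2) {c : ℤ_[p]} (hc : toZMod c ≠ 0)
    (h : IsSquare (toZMod c)) : IsSquare c := by
  obtain ⟨r, hr⟩ := h
  obtain ⟨y₀, rfl⟩ := toZMod_surjective r
  have h2y₀ : ‖2 * y₀‖ = 1 := by
    rw [norm_eq_one_iff_toZMod_ne_zero, map_mul, map_ofNat]
    refine mul_ne_zero (ZMod.natCast_ne_zero_of_prime_ne Nat.prime_two hp) ?_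
    rintro h0
    simp [hr, h0] at hc
  set F : ℤ_[p][X] := X ^ 2 - C c
  have hF (y : ℤ_[p]) : F.aeval y = y ^ 2 - c := by simp [F]
  have hF' : F.derivative.aeval y₀ = 2 * y₀ := by simp [F, one_add_one_eq_two]
  have hnorm : ‖F.aeval y₀‖ < ‖F.derivative.aeval y₀‖ ^ 2 := by
    rw [hF, hF', h2y₀, one_pow, norm_lt_one_iff_toZMod_eq_zero]
    simp [hr, sq]
  obtain ⟨y, hy, -⟩ := hensels_lemma hnorm
  exact ⟨y, by rw [hF] at hy; linear_combination -hy⟩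

lemma exists_sq_add_sq_eq (hp : p ≠ 2) {c : ℤ_[p]} (hc : toZMod c ≠ 0) :
    ∃ y z : ℤ_[p], y ^ 2 + z ^ 2 = c := by
  obtain ⟨y₀, z₀, hy₀, hyz⟩ := ZMod.exists_sq_add_sq_of_ne_zero hc
  obtain ⟨z, rfl⟩ := toZMod_surjective z₀
  have hcz : toZMod (c - z ^ 2) = y₀ ^ 2 := by simp [← hyz]
  obtain ⟨y, hy⟩ := isSquare_of_isSquare_toZMod hp (c := c - z ^ 2)
    (by rw [hcz]; exact pow_ne_zero 2 hy₀) ⟨y₀, by rw [hcz, sq]⟩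
  exact ⟨y, z, by linear_combination -hy⟩

lemma exists_toZMod_quarticForm_ne_zero (hp : p ≠ 2) {a b : ℤ} (hab : IsCoprime a b) :
    ∃ x : ℤ_[p], toZMod (quarticForm (a : ℤ_[p]) b x) ≠ 0 := by
  have hab' : (a : ZMod p) ≠ 0 ∨ (b : ZMod p) ≠ 0 := by
    by_contra! h
    simpa [h] using hab.map (Int.castRingHom (ZMod p))
  obtain ⟨t, ht⟩ := ZMod.exists_quarticForm_ne_zero hp hab'
  obtain ⟨x, rfl⟩ := toZMod_surjective t
  exact ⟨x, by simpa [map_quarticForm] using ht⟩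

end PadicInt

theorem stmt_13 (p : ℕ) [Fact p.Prime] (h5 : 5 ≤ p) (a b : ℤ) (hab : IsCoprime a b) :
    ∃ x y z : ℚ_[p], y ^ 2 + z ^ 2
      = (a : ℚ_[p]) ^ 2 * (x ^ 2 - 2) * (3 - x ^ 2)
        + (b : ℚ_[p]) ^ 2 * (2 * x ^ 4 + 3 * x ^ 2 - 1) := by
  have hp : p ≠ 2 := by omega
  obtain ⟨x, hx⟩ := PadicInt.exists_toZMod_quarticForm_ne_zero hp hab
  obtain ⟨y, z, hyz⟩ := PadicInt.exists_sq_add_sq_eq hp hx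
  refine ⟨x, y, z, ?_⟩
  have := congrArg ((↑) : ℤ_[p] → ℚ_[p]) hyz
  push_cast [quarticForm] at this
  exact this
end

section
/- Let u, v be coprime integers, a = 6u² - v², b = 12v². Then there exist x, y, z ∈ ℚ₃ with y² + z² = (2b² - a²)x⁴ + (3b² + 5a²)x² - (6a² + b²). In particular, for n sufficiently large, x = 3⁻ⁿ gives P(x) of even 3-adic valuation, hence representable by y² + z² over ℚ₃. -/
/-!
At `x = 1` the right-hand side is `4b² - 2a²`. If `3 ∤ v` this is `≡ 1 (mod 3)`; if `v = 3w`,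
then `3 ∤ u` by coprimality and it is `9` times an integer `≡ 1 (mod 3)`. Either way Hensel's
lemma makes it a square in `ℚ₃`, so one may take `z = 0`.
-/

open Polynomial

theorem PadicInt.exists_sq_eq_of_norm_sub_one_lt {p : ℕ} [Fact p.Prime] (hp : p ≠ 2)
    {c : ℤ_[p]} (hc : ‖c - 1‖ < 1) : ∃ s : ℤ_[p], s ^ 2 = c := by
  have h2 : ‖(2 : ℤ_[p])‖ = 1 := by
    exact_mod_cast norm_natCast_eq_one_iff.2 ((Nat.coprime_primes Fact.out Nat.prime_two).2 hp)
  have hnorm : ‖(X ^ 2 - C c).aeval (1 : ℤ_[p])‖ <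
      ‖(X ^ 2 - C c).derivative.aeval (1 : ℤ_[p])‖ ^ 2 := by
    simpa [one_add_one_eq_two, h2, norm_sub_rev] using hc
  obtain ⟨s, hs, -⟩ := hensels_lemma hnorm
  exact ⟨s, by simpa [sub_eq_zero] using hs⟩

theorem Padic.exists_sq_eq_intCast_of_modEq_one {p : ℕ} [Fact p.Prime] (hp : p ≠ 2) {c : ℤ}
    (hc : c ≡ 1 [ZMOD p]) : ∃ s : ℚ_[p], s ^ 2 = c := by
  have hnorm : ‖(c : ℤ_[p]) - 1‖ < 1 := by
    rw [← Int.cast_one, ← Int.cast_sub, PadicInt.norm_int_lt_one_iff_dvd]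
    exact hc.symm.dvd
  obtain ⟨s, hs⟩ := PadicInt.exists_sq_eq_of_norm_sub_one_lt hp hnorm
  exact ⟨s, by exact_mod_cast congrArg ((↑) : ℤ_[p] → ℚ_[p]) hs⟩

theorem modEq_one_of_not_three_dvd_right (u v : ℤ) (hv : ¬ 3 ∣ v) :
    4 * (12 * v ^ 2) ^ 2 - 2 * (6 * u ^ 2 - v ^ 2) ^ 2 ≡ 1 [ZMOD 3] := by
  have hv : (v : ZMod 3) ≠ 0 := by rwa [Ne, ZMod.intCast_zmod_eq_zero_iff_dvd]
  refine (ZMod.intCast_eq_intCast_iff _ _ 3).1 ?_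
  push_cast
  revert hv
  generalize (u : ZMod 3) = x
  generalize (v : ZMod 3) = y
  revert x y
  decide

theorem modEq_one_of_not_three_dvd_left (u w : ℤ) (hu : ¬ 3 ∣ u) :
    4 * 1296 * w ^ 4 - 2 * (2 * u ^ 2 - 3 * w ^ 2) ^ 2 ≡ 1 [ZMOD 3] := by
  have hu : (u : ZMod 3) ≠ 0 := by rwa [Ne, ZMod.intCast_zmod_eq_zero_iff_dvd]
  refine (ZMod.intCast_eq_intCast_iff _ _ 3).1 ?_
  push_cast
  revert hu
  generalize (u : ZMod 3) = x
  generalize (w : ZMod 3) = y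
  revert x y
  decide

theorem exists_sq_eq_in_padic_three {u v : ℤ} (huv : IsCoprime u v) :
    ∃ s : ℚ_[3], s ^ 2 = ((4 * (12 * v ^ 2) ^ 2 - 2 * (6 * u ^ 2 - v ^ 2) ^ 2 : ℤ) : ℚ_[3]) := by
  have h3 : (3 : ℕ) ≠ 2 := by norm_num
  by_cases hv : (3 : ℤ) ∣ v
  · obtain ⟨w, rfl⟩ := hv
    have hu : ¬ (3 : ℤ) ∣ u := fun hu ↦ by
      simpa using Int.isUnit_iff_natAbs_eq.mp (huv.isUnit_of_dvd' hu (dvd_mul_right 3 w))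
    obtain ⟨s, hs⟩ := Padic.exists_sq_eq_intCast_of_modEq_one h3
      (modEq_one_of_not_three_dvd_left u w hu)
    refine ⟨3 * s, ?_⟩
    rw [mul_pow, hs]
    push_cast
    ring
  · exact Padic.exists_sq_eq_intCast_of_modEq_one h3 (modEq_one_of_not_three_dvd_right u v hv)

theorem stmt_18 (u v : ℤ) (huv : IsCoprime u v) (a b : ℤ)
    (ha : a = 6 * u ^ 2 - v ^ 2) (hb : b = 12 * v ^ 2) :
    ∃ x y z : ℚ_[3], y ^ 2 + z ^ 2
      = (2 * (b : ℚ_[3]) ^ 2 - (a : ℚ_[3]) ^ 2) * x ^ 4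
        + (3 * (b : ℚ_[3]) ^ 2 + 5 * (a : ℚ_[3]) ^ 2) * x ^ 2
        - (6 * (a : ℚ_[3]) ^ 2 + (b : ℚ_[3]) ^ 2) := by
  subst ha hb
  obtain ⟨s, hs⟩ := exists_sq_eq_in_padic_three huv
  refine ⟨1, s, 0, ?_⟩
  rw [hs]
  push_cast
  ring
end
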